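/- arXiv:1703.05080 — 2 statements merged into one kernel-verified Lean document; each statement's English description precedes it below -/
import Mathlib

section
/- Let λ_min, λ_max, β_min, β_max be real numbers with 0 < λ_min ≤ λ_max and 0 < β_min ≤ β_max, and define ε^b = λ_min β_min / (1 + 2λ_max/λ_min + (λ_max/λ_min)(β_max/β_min)). Then for every ε with 0 < ε ≤ ε^b one has ε < λ_min β_min and (λ_min β_min − ε)/(λ_max(β_max + β_min) + ε) ≥ ε/(λ_min β_min − ε). -/
/-- for reals `0 < λ_min ≤ λ_max`, `0 < β_min ≤ β_max`, and
`ε^b = λ_min β_min / (1 + 2λ_max/λ_min + (λ_max/λ_min)(β_max/β_min))`, every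
`ε` with `0 < ε ≤ ε^b` satisfies `ε < λ_min β_min` and
`(λ_min β_min − ε)/(λ_max(β_max + β_min) + ε) ≥ ε/(λ_min β_min − ε)`. -/
theorem statement13 (lammin lammax bmin bmax : ℝ)
    (hlam0 : 0 < lammin) (hlam : lammin ≤ lammax)
    (hb0 : 0 < bmin) (hb : bmin ≤ bmax) :
    ∀ ε : ℝ, 0 < ε →
      ε ≤ lammin * bmin /
          (1 + 2 * (lammax / lammin) + (lammax / lammin) * (bmax / bmin)) →
      ε < lammin * bmin ∧
        ε / (lammin * bmin - ε)
          ≤ (lammin * bmin - ε) / (lammax * (bmax + bmin) + ε) := by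
  intro ε hε hεb
  have hlmax : 0 < lammax := lt_of_lt_of_le hlam0 hlam
  have hbmax : 0 < bmax := lt_of_lt_of_le hb0 hb
  have hDpos : 0 < 1 + 2 * (lammax / lammin) + (lammax / lammin) * (bmax / bmin) := by
    positivity
  have key : ε * (1 + 2 * (lammax / lammin) + (lammax / lammin) * (bmax / bmin))
      ≤ lammin * bmin := by
    rw [← le_div_iff₀ hDpos]; exact hεb
  have key2 : ε * (lammin * bmin + 2 * lammax * bmin + lammax * bmax)
      ≤ (lammin * bmin) ^ 2 := by
    have h := mul_le_mul_of_nonneg_right key (le_of_lt (mul_pos hlam0 hb0))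
    have : ε * (1 + 2 * (lammax / lammin) + (lammax / lammin) * (bmax / bmin)) *
        (lammin * bmin) = ε * (lammin * bmin + 2 * lammax * bmin + lammax * bmax) := by
      field_simp
    nlinarith [this]
  have hlt : ε < lammin * bmin := by
    nlinarith [mul_pos hlam0 hb0, mul_pos hε (mul_pos hlmax hb0),
      mul_pos hε (mul_pos hlmax hbmax)]
  refine ⟨hlt, ?_⟩
  have hden1 : 0 < lammin * bmin - ε := by linarith
  have hden2 : 0 < lammax * (bmax + bmin) + ε := by positivity
  rw [div_le_div_iff₀ hden1 hden2]
  nlinarith [mul_pos hlam0 hb0, mul_le_mul_of_nonneg_right hlam hb0.le]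
end

section
/- Assume X_I has full column rank (λ_min > 0), erc(X,I) < 1, and 0 ≤ ε₂ < min(ε^a, ε^b), where ε^a = β_min λ_min(1 − erc(X,I))/2 and ε^b = λ_min β_min/(1 + 2λ_max/λ_min + (λ_max/λ_min)(β_max/β_min)). Run OMP on y. Then the first k₀ selected indices are exactly the elements of I, and t(k) > t(k₀) for every 1 ≤ k ≤ k₀ − 1. -/
open scoped BigOperators Classical
open MeasureTheory Filter

noncomputable section

namespace TFOMP

variable {n p : ℕ}

/-- The `j`-th column of `X`, as a vector in Euclidean space `ℝ^n`. -/
def col (X : Matrix (Fin n) (Fin p) ℝ) (j : Fin p) : EuclideanSpace ℝ (Fin n) :=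
  WithLp.toLp 2 (fun i => X i j)

/-- Column span of the submatrix `X_J`. -/
def colSpan (X : Matrix (Fin n) (Fin p) ℝ) (J : Finset (Fin p)) :
    Submodule ℝ (EuclideanSpace ℝ (Fin n)) :=
  Submodule.span ℝ (col X '' (J : Set (Fin p)))

/-- Orthogonal projection `P_J y` onto the column span of `X_J` (`P_∅ = 0`). -/
def proj (X : Matrix (Fin n) (Fin p) ℝ) (J : Finset (Fin p))
    (y : EuclideanSpace ℝ (Fin n)) : EuclideanSpace ℝ (Fin n) :=
  (Submodule.orthogonalProjection (colSpan X J) y : EuclideanSpace ℝ (Fin n))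

/-- Residual `(I_n − P_J) y`. -/
def resid (X : Matrix (Fin n) (Fin p) ℝ) (J : Finset (Fin p))
    (y : EuclideanSpace ℝ (Fin n)) : EuclideanSpace ℝ (Fin n) :=
  y - proj X J y


/-- The product `Xβ ∈ ℝ^n`, as a vector in Euclidean space. -/
def mulVecE (X : Matrix (Fin n) (Fin p) ℝ) (β : Fin p → ℝ) : EuclideanSpace ℝ (Fin n) :=
  WithLp.toLp 2 (fun i => ∑ j, X i j * β j)

/-- `X_J` has full column rank: the columns of `X` indexed by `J` are
linearly independent. -/
def FullColRank (X : Matrix (Fin n) (Fin p) ℝ) (J : Finset (Fin p)) : Prop :=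
  LinearIndependent ℝ (fun j : J => col X j)

/-- The Gram matrix `X_Iᵀ X_I`. -/
def gram (X : Matrix (Fin n) (Fin p) ℝ) (I : Finset (Fin p)) : Matrix I I ℝ :=
  fun a b => ∑ i, X i (a : Fin p) * X i (b : Fin p)

/-- `l` is the smallest (real) eigenvalue of `G`. -/
def IsSmallestEig {m : Type*} [Fintype m] (G : Matrix m m ℝ) (l : ℝ) : Prop :=
  (∃ v : m → ℝ, v ≠ 0 ∧ G.mulVec v = l • v) ∧
    ∀ μ : ℝ, (∃ v : m → ℝ, v ≠ 0 ∧ G.mulVec v = μ • v) → l ≤ μ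

/-- `l` is the largest (real) eigenvalue of `G`. -/
def IsLargestEig {m : Type*} [Fintype m] (G : Matrix m m ℝ) (l : ℝ) : Prop :=
  (∃ v : m → ℝ, v ≠ 0 ∧ G.mulVec v = l • v) ∧
    ∀ μ : ℝ, (∃ v : m → ℝ, v ≠ 0 ∧ G.mulVec v = μ • v) → μ ≤ l

/-- `X_I† X_j = (X_IᵀX_I)⁻¹ X_Iᵀ X_j`, the coefficient vector of column `j`
against the columns indexed by `I`. -/
def pseudoCoeff (X : Matrix (Fin n) (Fin p) ℝ) (I : Finset (Fin p)) (j : Fin p) :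
    I → ℝ :=
  (gram X I)⁻¹.mulVec fun a => ∑ i, X i (a : Fin p) * X i j

/-- Exact recovery coefficient `erc(X, I) = max_{j ∉ I} ‖X_I† X_j‖₁`
(as a supremum; by convention `0` when `Iᶜ = ∅`). -/
def erc (X : Matrix (Fin n) (Fin p) ℝ) (I : Finset (Fin p)) : ℝ :=
  sSup ((fun j => ∑ a : I, |pseudoCoeff X I j a|) '' {j | j ∉ I})

/-- Mutual coherence `μ_X = max_{i ≠ j} |X_iᵀ X_j|` (as a supremum). -/
def mutualCoherence (X : Matrix (Fin n) (Fin p) ℝ) : ℝ :=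
  sSup {r | ∃ i j : Fin p, i ≠ j ∧ r = |∑ k, X k i * X k j|}

/-- `δ` is a restricted isometry constant of order `k` for `X`:
`(1−δ)‖b‖₂² ≤ ‖Xb‖₂² ≤ (1+δ)‖b‖₂²` for all `k`-sparse `b`. -/
def IsRIC (X : Matrix (Fin n) (Fin p) ℝ) (k : ℕ) (δ : ℝ) : Prop :=
  0 ≤ δ ∧ ∀ b : Fin p → ℝ, ({j | b j ≠ 0}.toFinset.card ≤ k) →
    (1 - δ) * ‖(b : Fin p → ℝ)‖ ^ 2
        ≤ ‖(X.mulVec b : Fin n → ℝ)‖ ^ 2 ∧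
      ‖(X.mulVec b : Fin n → ℝ)‖ ^ 2
        ≤ (1 + δ) * ‖(b : Fin p → ℝ)‖ ^ 2

/-- `β_min = min_{k ∈ I} |β_k|` (as an infimum). -/
def betaMin (β : Fin p → ℝ) (I : Finset (Fin p)) : ℝ :=
  sInf ((fun k => |β k|) '' (I : Set (Fin p)))

/-- `β_max = max_{k ∈ I} |β_k|` (as a supremum). -/
def betaMax (β : Fin p → ℝ) (I : Finset (Fin p)) : ℝ :=
  sSup ((fun k => |β k|) '' (I : Set (Fin p)))

/-- The restriction `β_u` of `β` to the index set `u` (zero outside `u`),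
viewed in `ℓ₂`. -/
def restrictVec (β : Fin p → ℝ) (u : Finset (Fin p)) : EuclideanSpace ℝ (Fin p) :=
  WithLp.toLp 2 (fun k => if k ∈ u then β k else 0)

/-- The support set `J^k = {t_1, …, t_k}` of OMP after `k` iterations (here `t`
is `0`-indexed: `t 0, t 1, …` are the successively selected indices, so the
paper's `t_i` is `t (i-1)`). -/
def ompSupp (t : ℕ → Fin p) (k : ℕ) : Finset (Fin p) :=
  (Finset.range k).image t

/-- The OMP residual `r^k = (I_n − P_{J^k}) y`. -/
def ompResid (X : Matrix (Fin n) (Fin p) ℝ) (y : EuclideanSpace ℝ (Fin n))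
    (t : ℕ → Fin p) (k : ℕ) : EuclideanSpace ℝ (Fin n) :=
  resid X (ompSupp t k) y

/-- `t` is the sequence of indices selected by OMP (with least-index
tie-breaking) run on data `(X, y)`: at each step, the next index `t k` is the
smallest index maximizing the absolute correlation `|X_jᵀ r^k|` with the
current residual `r^k`. -/
def IsOMP (X : Matrix (Fin n) (Fin p) ℝ) (y : EuclideanSpace ℝ (Fin n))
    (t : ℕ → Fin p) : Prop :=
  ∀ k : ℕ, IsLeast {j : Fin p | ∀ j' : Fin p,
    |(inner ℝ (col X j') (ompResid X y t k) : ℝ)| ≤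
      |(inner ℝ (col X j) (ompResid X y t k) : ℝ)|} (t k)

/-- The ratio statistic `t(k) = ‖r^k‖₂ / ‖r^{k−1}‖₂` (used for `k ≥ 1`). -/
def ratio (X : Matrix (Fin n) (Fin p) ℝ) (y : EuclideanSpace ℝ (Fin n))
    (t : ℕ → Fin p) (k : ℕ) : ℝ :=
  ‖ompResid X y t k‖ / ‖ompResid X y t (k - 1)‖

end TFOMP

open TFOMP

/-!
While `J^k ⊊ I`, the signal part `s` of the residual `r^k` lies in the span of `X_I` and is
orthogonal to the selected columns. The Rayleigh bounds of the Gram matrix make some column of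
`I \ J^k` correlate with `s` by at least `λ_min β_min`, while the exact recovery coefficient caps
the correlation of every column outside `I` by `erc` times the largest correlation inside `I`.
The noise moves each correlation by at most `ε₂`, so `ε₂ < ε^a` forces OMP to pick a new index of
`I` at each of the first `k₀` steps.

Along this path `‖r^m‖` is within `ε₂` of the norm of the signal residual, which the same Rayleigh
bounds place between `√λ_min ‖β_{I \ J^m}‖` and `√λ_max ‖β_{I \ J^m}‖`. Hence
`t(k₀) ≤ ε₂ / (λ_min β_min - ε₂)`, whereas for `k < k₀` the ratio `t(k)` stays above a quantity
that `ε₂ < ε^b` keeps larger.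
-/

namespace TFOMP

open Matrix
open scoped InnerProductSpace

/-- The bounds are those on `‖r^{k₀}‖, ‖r^{k₀-1}‖, ‖r^k‖, ‖r^{k-1}‖`, with `c = ‖β_{I \ J^k}‖`.
After cross-multiplying, the claim reduces to
`ε (λ_max (c + β_max) + λ_min (c + β_min)) < λ_min² β_min c`, which is where `ε^b` comes from. -/
lemma div_lt_div_of_bounds {l L bm bM c ε a₀ b₀ a b : ℝ} (hl : 0 < l) (hlL : l ≤ L)
    (hbm : 0 < bm) (hbM : bm ≤ bM) (hc : bm ≤ c) (hε : 0 ≤ ε)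
    (heb : ε < l * bm / (1 + 2 * (L / l) + (L / l) * (bM / bm)))
    (ha₀ : a₀ ≤ ε) (hb₀ : l * bm - ε ≤ b₀) (ha : l * c - ε ≤ a)
    (hb : b ≤ L * (c + bM) + ε) (hb' : l * bm - ε ≤ b) : a₀ / b₀ < a / b := by
  have hL : 0 < L := hl.trans_le hlL
  have hbM0 : 0 < bM := hbm.trans_le hbM
  have hden : 1 + 2 * (L / l) + (L / l) * (bM / bm) =
      (l * bm + 2 * L * bm + L * bM) / (l * bm) := by
    field_simp
  rw [hden, lt_div_iff₀ (by positivity), mul_div_assoc', div_lt_iff₀ (by positivity)] at heb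
  have hc0 : 0 < c := hbm.trans_le hc
  have hd : 0 < l * bm - ε := by
    have hD : ε * (l * bm) ≤ ε * (l * bm + 2 * L * bm + L * bM) := by gcongr; nlinarith
    exact sub_pos.2 (lt_of_mul_lt_mul_right (hD.trans_lt heb) (by positivity))
  have hcross : ε * (bm * (L * (c + bM) + l * (c + bm))) ≤
      ε * (c * (l * bm + 2 * L * bm + L * bM)) := by
    gcongr ε * ?_
    nlinarith [mul_nonneg hbm.le (sub_nonneg.2 (mul_le_mul hlL hc hbm.le hL.le)),
      mul_nonneg (mul_nonneg hL.le hbM0.le) (sub_nonneg.2 hc)]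
  have hmid : ε * (L * (c + bM) + ε) < (l * c - ε) * (l * bm - ε) := by
    nlinarith [mul_lt_mul_of_pos_right heb hc0]
  calc a₀ / b₀ ≤ ε / (l * bm - ε) := div_le_div₀ hε ha₀ hd hb₀
    _ < (l * c - ε) / (L * (c + bM) + ε) := by
        rw [div_lt_div_iff₀ hd (by positivity)]
        linarith
    _ ≤ a / b := div_le_div₀ (by nlinarith) ha (hd.trans_le hb') hb

section Matrix

variable {m : Type*} [Fintype m] {G : Matrix m m ℝ}

lemma IsLargestEig.isSmallestEig_neg {L : ℝ} (hL : IsLargestEig G L) :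
    IsSmallestEig (-G) (-L) := by
  have hneg : ∀ (μ : ℝ) (v : m → ℝ), -G *ᵥ v = μ • v ↔ G *ᵥ v = (-μ) • v := by
    intro μ v
    rw [Matrix.neg_mulVec, neg_smul, neg_eq_iff_eq_neg]
  refine ⟨?_, ?_⟩
  · obtain ⟨v, hv, hGv⟩ := hL.1
    exact ⟨v, hv, (hneg _ _).2 (by rwa [neg_neg])⟩
  · rintro μ ⟨v, hv, hGv⟩
    linarith [hL.2 _ ⟨v, hv, (hneg _ _).1 hGv⟩]

variable [DecidableEq m]

lemma posSemidef_of_forall_eigenvalue_nonneg (hG : G.IsHermitian)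
    (h : ∀ μ : ℝ, (∃ v : m → ℝ, v ≠ 0 ∧ G *ᵥ v = μ • v) → 0 ≤ μ) : G.PosSemidef :=
  hG.posSemidef_iff_eigenvalues_nonneg.2 fun i =>
    h _ ⟨_, mt (WithLp.ofLp_eq_zero 2).1 (hG.eigenvectorBasis.orthonormal.ne_zero i),
      hG.mulVec_eigenvectorBasis i⟩

lemma IsSmallestEig.mul_dotProduct_self_le {l : ℝ} (hG : G.IsHermitian)
    (hl : IsSmallestEig G l) (x : m → ℝ) : l * (x ⬝ᵥ x) ≤ x ⬝ᵥ G *ᵥ x := by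
  have hpsd : (G - l • 1).PosSemidef := by
    refine posSemidef_of_forall_eigenvalue_nonneg (hG.sub (by simp [Matrix.IsHermitian])) ?_
    rintro μ ⟨v, hv, hGv⟩
    have : G *ᵥ v = (μ + l) • v := by
      rw [Matrix.sub_mulVec, Matrix.smul_mulVec, Matrix.one_mulVec, sub_eq_iff_eq_add] at hGv
      rw [hGv, add_smul]
    linarith [hl.2 _ ⟨v, hv, this⟩]
  have := hpsd.dotProduct_mulVec_nonneg x
  simp only [star_trivial, Matrix.sub_mulVec, Matrix.smul_mulVec, Matrix.one_mulVec,
    dotProduct_sub, dotProduct_smul, smul_eq_mul] at this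
  linarith

lemma IsLargestEig.dotProduct_le_mul_dotProduct_self {L : ℝ} (hG : G.IsHermitian)
    (hL : IsLargestEig G L) (x : m → ℝ) : x ⬝ᵥ G *ᵥ x ≤ L * (x ⬝ᵥ x) := by
  have := hL.isSmallestEig_neg.mul_dotProduct_self_le hG.neg x
  simp only [Matrix.neg_mulVec, dotProduct_neg, neg_mul] at this
  linarith

lemma IsSmallestEig.le_diag {l : ℝ} (hG : G.IsHermitian) (hl : IsSmallestEig G l) (i : m) :
    l ≤ G i i := by
  simpa using hl.mul_dotProduct_self_le hG (Pi.single i 1)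

lemma IsLargestEig.diag_le {L : ℝ} (hG : G.IsHermitian) (hL : IsLargestEig G L) (i : m) :
    G i i ≤ L := by
  simpa using hL.dotProduct_le_mul_dotProduct_self hG (Pi.single i 1)

end Matrix

variable {n p : ℕ} (X : Matrix (Fin n) (Fin p) ℝ)

section Residual

lemma resid_eq_starProjection (J : Finset (Fin p)) (y : EuclideanSpace ℝ (Fin n)) :
    resid X J y = (colSpan X J)ᗮ.starProjection y := by
  rw [Submodule.starProjection_orthogonal_val]
  rfl

lemma resid_add (J : Finset (Fin p)) (y z : EuclideanSpace ℝ (Fin n)) :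
    resid X J (y + z) = resid X J y + resid X J z := by
  simp only [resid_eq_starProjection, map_add]

lemma norm_resid_le (J : Finset (Fin p)) (y : EuclideanSpace ℝ (Fin n)) :
    ‖resid X J y‖ ≤ ‖y‖ := by
  rw [resid_eq_starProjection]
  exact Submodule.norm_starProjection_apply_le _ y

lemma resid_eq_zero_of_mem {J : Finset (Fin p)} {z : EuclideanSpace ℝ (Fin n)}
    (hz : z ∈ colSpan X J) : resid X J z = 0 := by
  rw [resid_eq_starProjection]
  exact Submodule.starProjection_orthogonal_apply_eq_zero hz

lemma inner_col_resid_eq_zero {J : Finset (Fin p)} {a : Fin p} (ha : a ∈ J)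
    (y : EuclideanSpace ℝ (Fin n)) : ⟪col X a, resid X J y⟫_ℝ = 0 := by
  rw [resid_eq_starProjection]
  exact Submodule.inner_right_of_mem_orthogonal
    (Submodule.subset_span (Set.mem_image_of_mem _ ha)) (Submodule.starProjection_apply_mem _ y)

lemma abs_norm_resid_add_sub_le (J : Finset (Fin p)) (y w : EuclideanSpace ℝ (Fin n)) :
    |‖resid X J (y + w)‖ - ‖resid X J y‖| ≤ ‖w‖ := by
  rw [resid_add]
  refine (abs_norm_sub_norm_le _ _).trans ?_
  simpa using norm_resid_le X J w

lemma abs_abs_inner_col_resid_add_sub_le {i : Fin p} (hi : ‖col X i‖ = 1)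
    (J : Finset (Fin p)) (y w : EuclideanSpace ℝ (Fin n)) :
    |(|⟪col X i, resid X J (y + w)⟫_ℝ| - |⟪col X i, resid X J y⟫_ℝ|)| ≤ ‖w‖ := by
  refine (abs_abs_sub_abs_le_abs_sub _ _).trans ?_
  rw [resid_add, inner_add_right, add_sub_cancel_left]
  refine (abs_real_inner_le_norm _ _).trans ?_
  rw [hi, one_mul]
  exact norm_resid_le X J w

end Residual

section Synthesis

lemma mulVecE_eq_sum (v : Fin p → ℝ) : mulVecE X v = ∑ j, v j • col X j := by
  ext i
  simp [mulVecE, col, mul_comm]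

lemma mulVecE_sub (u v : Fin p → ℝ) : mulVecE X (u - v) = mulVecE X u - mulVecE X v := by
  simp only [mulVecE_eq_sum, Pi.sub_apply, sub_smul, Finset.sum_sub_distrib]

lemma mulVecE_add (u v : Fin p → ℝ) : mulVecE X (u + v) = mulVecE X u + mulVecE X v := by
  simp only [mulVecE_eq_sum, Pi.add_apply, add_smul, Finset.sum_add_distrib]

lemma mulVecE_eq_sum_subtype {J : Finset (Fin p)} {v : Fin p → ℝ} (hv : ∀ k ∉ J, v k = 0) :
    mulVecE X v = ∑ a : J, v a • col X a := by
  rw [mulVecE_eq_sum, Finset.sum_coe_sort J (fun a => v a • col X a)]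
  exact (Finset.sum_subset (Finset.subset_univ J) fun k _ hk => by simp [hv k hk]).symm

lemma mem_colSpan_iff {J : Finset (Fin p)} {z : EuclideanSpace ℝ (Fin n)} :
    z ∈ colSpan X J ↔
      ∃ v : EuclideanSpace ℝ (Fin p), (∀ k ∉ J, v k = 0) ∧ mulVecE X v = z := by
  rw [colSpan, Submodule.mem_span_image_finset_iff_exists_fun']
  constructor
  · rintro ⟨c, rfl⟩
    refine ⟨WithLp.toLp 2 fun k => if k ∈ J then c k else 0, fun k hk => by simp [hk], ?_⟩
    simp [mulVecE_eq_sum, ite_smul, Finset.sum_ite_mem]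
  · rintro ⟨v, hv, rfl⟩
    exact ⟨v, by rw [mulVecE_eq_sum_subtype X hv, Finset.sum_coe_sort J (fun a => v a • col X a)]⟩

end Synthesis

section Gram

variable (I : Finset (Fin p))

lemma inner_col_col (a b : Fin p) : ⟪col X a, col X b⟫_ℝ = ∑ i, X i a * X i b := by
  simp [PiLp.inner_apply, col, mul_comm]

lemma gram_eq_gram : gram X I = Matrix.gram ℝ (fun a : I => col X a) := by
  ext a b
  simp [gram, inner_col_col]

lemma gram_isHermitian : (gram X I).IsHermitian := by
  rw [gram_eq_gram]
  exact Matrix.isHermitian_gram ℝ _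

lemma det_gram_ne_zero (hrank : FullColRank X I) : (gram X I).det ≠ 0 := by
  rw [gram_eq_gram]
  exact Matrix.det_gram_ne_zero_iff_linearIndependent.2 hrank

lemma dotProduct_gram_mulVec (c d : I → ℝ) :
    c ⬝ᵥ gram X I *ᵥ d = ⟪∑ a, c a • col X a, ∑ a, d a • col X a⟫_ℝ := by
  simpa [gram_eq_gram] using Matrix.star_dotProduct_gram_mulVec (𝕜 := ℝ) (fun a : I => col X a) c d

lemma gram_mulVec_apply (c : I → ℝ) (b : I) :
    (gram X I *ᵥ c) b = ⟪col X b, ∑ a, c a • col X a⟫_ℝ := by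
  simp [Matrix.mulVec, dotProduct, gram_eq_gram, inner_sum, real_inner_smul_right, mul_comm]

lemma gram_apply_self (hcols : ∀ j, ‖col X j‖ = 1) (a : I) : gram X I a a = 1 := by
  simp [gram_eq_gram, hcols]

lemma le_one_of_isSmallestEig_gram (hcols : ∀ j, ‖col X j‖ = 1) {l : ℝ}
    (hl : IsSmallestEig (gram X I) l) (hI : I.Nonempty) : l ≤ 1 :=
  have ⟨a, ha⟩ := hI
  gram_apply_self X I hcols ⟨a, ha⟩ ▸ hl.le_diag (gram_isHermitian X I) _

lemma one_le_of_isLargestEig_gram (hcols : ∀ j, ‖col X j‖ = 1) {L : ℝ}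
    (hL : IsLargestEig (gram X I) L) (hI : I.Nonempty) : 1 ≤ L :=
  have ⟨a, ha⟩ := hI
  gram_apply_self X I hcols ⟨a, ha⟩ ▸ hL.diag_le (gram_isHermitian X I) _

lemma pseudoCoeff_dotProduct_gram_mulVec (hrank : FullColRank X I) (j : Fin p) (c : I → ℝ) :
    pseudoCoeff X I j ⬝ᵥ gram X I *ᵥ c = ⟪col X j, ∑ a, c a • col X a⟫_ℝ := by
  have hsymm : (gram X I)ᵀ = gram X I := gram_isHermitian X I
  rw [pseudoCoeff, Matrix.dotProduct_mulVec, ← Matrix.mulVec_transpose, hsymm,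
    Matrix.mulVec_mulVec,
    Matrix.mul_nonsing_inv _ (isUnit_iff_ne_zero.2 (det_gram_ne_zero X I hrank)),
    Matrix.one_mulVec, inner_sum]
  simp [dotProduct, real_inner_smul_right, inner_col_col, mul_comm]

end Gram

section Rayleigh

variable {X} {I : Finset (Fin p)} {v : EuclideanSpace ℝ (Fin p)}

lemma dotProduct_self_subtype (hv : ∀ k ∉ I, v k = 0) :
    (fun a : I => v a) ⬝ᵥ (fun a : I => v a) = ‖v‖ ^ 2 := by
  rw [EuclideanSpace.norm_sq_eq, dotProduct, Finset.sum_coe_sort I (fun a => v a * v a)]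
  refine Finset.sum_subset (Finset.subset_univ I) (fun k _ hk => by simp [hv k hk]) |>.trans ?_
  simp [sq]

lemma dotProduct_gram_mulVec_subtype (hv : ∀ k ∉ I, v k = 0) :
    (fun a : I => v a) ⬝ᵥ gram X I *ᵥ (fun a : I => v a) = ‖mulVecE X v‖ ^ 2 := by
  rw [dotProduct_gram_mulVec, ← mulVecE_eq_sum_subtype X hv, real_inner_self_eq_norm_sq]

lemma sqrt_mul_norm_le_norm_mulVecE {l : ℝ} (hl : IsSmallestEig (gram X I) l)
    (hv : ∀ k ∉ I, v k = 0) : √l * ‖v‖ ≤ ‖mulVecE X v‖ := by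
  have h := hl.mul_dotProduct_self_le (gram_isHermitian X I) (fun a : I => v a)
  rw [dotProduct_self_subtype hv, dotProduct_gram_mulVec_subtype hv] at h
  calc √l * ‖v‖ = √(l * ‖v‖ ^ 2) := by
        rw [Real.sqrt_mul' _ (sq_nonneg _), Real.sqrt_sq (norm_nonneg _)]
    _ ≤ √(‖mulVecE X v‖ ^ 2) := Real.sqrt_le_sqrt h
    _ = ‖mulVecE X v‖ := Real.sqrt_sq (norm_nonneg _)

lemma norm_mulVecE_le_sqrt_mul_norm {L : ℝ} (hL : IsLargestEig (gram X I) L)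
    (hv : ∀ k ∉ I, v k = 0) : ‖mulVecE X v‖ ≤ √L * ‖v‖ := by
  have h := hL.dotProduct_le_mul_dotProduct_self (gram_isHermitian X I) (fun a : I => v a)
  rw [dotProduct_self_subtype hv, dotProduct_gram_mulVec_subtype hv] at h
  calc ‖mulVecE X v‖ = √(‖mulVecE X v‖ ^ 2) := (Real.sqrt_sq (norm_nonneg _)).symm
    _ ≤ √(L * ‖v‖ ^ 2) := Real.sqrt_le_sqrt h
    _ = √L * ‖v‖ := by rw [Real.sqrt_mul' _ (sq_nonneg _), Real.sqrt_sq (norm_nonneg _)]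

end Rayleigh

section ERC

variable {I : Finset (Fin p)}

lemma erc_nonneg : 0 ≤ erc X I :=
  Real.sSup_nonneg fun _ ⟨_, _, hx⟩ => hx ▸ Finset.sum_nonneg fun _ _ => abs_nonneg _

lemma sum_abs_pseudoCoeff_le_erc {j : Fin p} (hj : j ∉ I) :
    ∑ a, |pseudoCoeff X I j a| ≤ erc X I :=
  le_csSup ((Set.toFinite _).image _).bddAbove ⟨j, hj, rfl⟩

lemma abs_inner_col_le_erc_mul (hrank : FullColRank X I) {j : Fin p} (hj : j ∉ I)
    {s : EuclideanSpace ℝ (Fin n)} (hs : s ∈ colSpan X I) {M : ℝ} (hM0 : 0 ≤ M)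
    (hM : ∀ a ∈ I, |⟪col X a, s⟫_ℝ| ≤ M) : |⟪col X j, s⟫_ℝ| ≤ erc X I * M := by
  obtain ⟨c, rfl⟩ := (Submodule.mem_span_image_finset_iff_exists_fun ℝ).1 hs
  rw [← pseudoCoeff_dotProduct_gram_mulVec X I hrank]
  calc |pseudoCoeff X I j ⬝ᵥ gram X I *ᵥ c|
      ≤ ∑ a, |pseudoCoeff X I j a| * |(gram X I *ᵥ c) a| := by
        simpa only [dotProduct, abs_mul] using
          Finset.abs_sum_le_sum_abs (fun a => pseudoCoeff X I j a * (gram X I *ᵥ c) a) Finset.univ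
    _ ≤ ∑ a, |pseudoCoeff X I j a| * M := by
        gcongr with a
        rw [gram_mulVec_apply]
        exact hM a a.2
    _ ≤ erc X I * M := by
        rw [← Finset.sum_mul]
        exact mul_le_mul_of_nonneg_right (sum_abs_pseudoCoeff_le_erc X hj) hM0

end ERC

section Coefficients

variable {β : Fin p → ℝ} {I : Finset (Fin p)}

lemma norm_restrictVec_le {u : Finset (Fin p)} {v : EuclideanSpace ℝ (Fin p)}
    (hv : ∀ a ∈ u, v a = β a) : ‖restrictVec β u‖ ≤ ‖v‖ := by
  rw [EuclideanSpace.norm_eq, EuclideanSpace.norm_eq]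
  gcongr with k
  by_cases hk : k ∈ u <;> simp [restrictVec, hk, hv]

lemma norm_sq_restrictVec (u : Finset (Fin p)) : ‖restrictVec β u‖ ^ 2 = ∑ a ∈ u, β a ^ 2 := by
  simp [EuclideanSpace.norm_sq_eq, restrictVec, apply_ite, Finset.sum_ite_mem]

lemma norm_restrictVec_sdiff_le (J : Finset (Fin p)) (a : Fin p) :
    ‖restrictVec β (I \ J)‖ ≤ ‖restrictVec β (I \ insert a J)‖ + |β a| :=
  calc ‖restrictVec β (I \ J)‖
      ≤ ‖restrictVec β (I \ insert a J) + EuclideanSpace.single a (β a)‖ := by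
        refine norm_restrictVec_le fun b hb => ?_
        by_cases hba : b = a
        · subst hba; simp [restrictVec]
        · simp_all [restrictVec]
    _ ≤ ‖restrictVec β (I \ insert a J)‖ + |β a| := by
        simpa using norm_add_le (restrictVec β (I \ insert a J)) (EuclideanSpace.single a (β a))

lemma betaMin_le_abs {a : Fin p} (ha : a ∈ I) : betaMin β I ≤ |β a| :=
  csInf_le ((Set.toFinite _).image _).bddBelow ⟨a, ha, rfl⟩

lemma abs_le_betaMax {a : Fin p} (ha : a ∈ I) : |β a| ≤ betaMax β I :=
  le_csSup ((Set.toFinite _).image _).bddAbove ⟨a, ha, rfl⟩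

lemma betaMin_pos (hsupp : ∀ k, k ∈ I ↔ β k ≠ 0) (hI : I.Nonempty) : 0 < betaMin β I := by
  obtain ⟨a, ha, hmin⟩ := ((Finset.coe_nonempty.2 hI).image fun k => |β k|).csInf_mem
    ((I : Set (Fin p)).toFinite.image _)
  rw [betaMin, ← hmin]
  exact abs_pos.2 ((hsupp a).1 ha)

lemma betaMin_le_norm_restrictVec {J : Finset (Fin p)} {a : Fin p} (ha : a ∈ I \ J) :
    betaMin β I ≤ ‖restrictVec β (I \ J)‖ :=
  calc betaMin β I ≤ |β a| := betaMin_le_abs (Finset.mem_sdiff.1 ha).1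
    _ = ‖restrictVec β (I \ J) a‖ := by simp [restrictVec, Finset.mem_sdiff.1 ha]
    _ ≤ ‖restrictVec β (I \ J)‖ := PiLp.norm_apply_le _ a

lemma betaMin_mul_sum_abs_le_norm_sq {u : Finset (Fin p)} (hu : u ⊆ I) :
    betaMin β I * ∑ a ∈ u, |β a| ≤ ‖restrictVec β u‖ ^ 2 := by
  rw [norm_sq_restrictVec, Finset.mul_sum]
  gcongr with a ha
  rw [← sq_abs, sq]
  exact mul_le_mul_of_nonneg_right (betaMin_le_abs (hu ha)) (abs_nonneg _)

end Coefficients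

section ResidualBounds

variable {X} {β : Fin p → ℝ} {I J : Finset (Fin p)} {w : EuclideanSpace ℝ (Fin n)} {ε : ℝ}

lemma exists_resid_mulVecE_eq (hβ : ∀ k ∉ I, β k = 0) (hJI : J ⊆ I) :
    ∃ v : EuclideanSpace ℝ (Fin p), (∀ k ∉ I, v k = 0) ∧ (∀ a ∈ I \ J, v a = β a) ∧
      resid X J (mulVecE X β) = mulVecE X v := by
  have hproj : proj X J (mulVecE X β) ∈ colSpan X J := Submodule.coe_mem _
  obtain ⟨d, hdJ, hd⟩ := (mem_colSpan_iff X).1 hproj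
  refine ⟨WithLp.toLp 2 β - d, fun k hk => ?_, fun a ha => ?_, ?_⟩
  · simp [hβ k hk, hdJ k fun hkJ => hk (hJI hkJ)]
  · simp [hdJ a (Finset.mem_sdiff.1 ha).2]
  · rw [resid, ← hd, WithLp.ofLp_sub, mulVecE_sub]

lemma sqrt_mul_norm_restrictVec_le_norm_resid {l : ℝ} (hl : IsSmallestEig (gram X I) l)
    (hβ : ∀ k ∉ I, β k = 0) (hJI : J ⊆ I) :
    √l * ‖restrictVec β (I \ J)‖ ≤ ‖resid X J (mulVecE X β)‖ := by
  obtain ⟨v, hvI, hvβ, hv⟩ := exists_resid_mulVecE_eq (X := X) hβ hJI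
  calc √l * ‖restrictVec β (I \ J)‖ ≤ √l * ‖v‖ := by gcongr; exact norm_restrictVec_le hvβ
    _ ≤ ‖resid X J (mulVecE X β)‖ := hv ▸ sqrt_mul_norm_le_norm_mulVecE hl hvI

lemma norm_resid_le_sqrt_mul_norm_restrictVec {L : ℝ} (hL : IsLargestEig (gram X I) L)
    (hβ : ∀ k ∉ I, β k = 0) : ‖resid X J (mulVecE X β)‖ ≤ √L * ‖restrictVec β (I \ J)‖ := by
  have hsplit : mulVecE X β =
      mulVecE X (restrictVec β (I \ J)) + mulVecE X (restrictVec β J) := by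
    rw [← mulVecE_add]
    congr 1
    ext k
    by_cases hkJ : k ∈ J
    · simp [restrictVec, hkJ]
    · by_cases hkI : k ∈ I <;> simp [restrictVec, hkJ, hkI, hβ]
  have hJ : mulVecE X (restrictVec β J) ∈ colSpan X J :=
    (mem_colSpan_iff X).2 ⟨_, fun k hk => by simp [restrictVec, hk], rfl⟩
  rw [hsplit, resid_add, resid_eq_zero_of_mem X hJ, add_zero]
  refine (norm_resid_le X J _).trans (norm_mulVecE_le_sqrt_mul_norm hL fun k hk => ?_)
  simp [restrictVec, hk]

lemma sqrt_mul_norm_restrictVec_sub_le_norm_resid {l : ℝ} (hl : IsSmallestEig (gram X I) l)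
    (hβ : ∀ k ∉ I, β k = 0) (hJI : J ⊆ I) (hw : ‖w‖ ≤ ε) :
    √l * ‖restrictVec β (I \ J)‖ - ε ≤ ‖resid X J (mulVecE X β + w)‖ := by
  linarith [sqrt_mul_norm_restrictVec_le_norm_resid hl hβ hJI,
    abs_le.1 (abs_norm_resid_add_sub_le X J (mulVecE X β) w)]

lemma norm_resid_le_sqrt_mul_norm_restrictVec_add {L : ℝ} (hL : IsLargestEig (gram X I) L)
    (hβ : ∀ k ∉ I, β k = 0) (hw : ‖w‖ ≤ ε) :
    ‖resid X J (mulVecE X β + w)‖ ≤ √L * ‖restrictVec β (I \ J)‖ + ε := by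
  linarith [norm_resid_le_sqrt_mul_norm_restrictVec (J := J) hL hβ,
    abs_le.1 (abs_norm_resid_add_sub_le X J (mulVecE X β) w)]

end ResidualBounds

section Selection

variable {X} {β : Fin p → ℝ} {I J : Finset (Fin p)} {w : EuclideanSpace ℝ (Fin n)} {ε l : ℝ}

lemma norm_sq_resid_eq_sum_sdiff (hβ : ∀ k ∉ I, β k = 0) (hJI : J ⊆ I) :
    ‖resid X J (mulVecE X β)‖ ^ 2 =
      ∑ a ∈ I \ J, β a * ⟪col X a, resid X J (mulVecE X β)⟫_ℝ := by
  obtain ⟨v, hvI, hvβ, hv⟩ := exists_resid_mulVecE_eq (X := X) hβ hJI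
  rw [← real_inner_self_eq_norm_sq]
  nth_rw 1 [hv]
  rw [mulVecE_eq_sum, sum_inner]
  simp only [real_inner_smul_left]
  refine (Finset.sum_subset (Finset.subset_univ _) fun k _ hk => ?_).symm.trans
    (Finset.sum_congr rfl fun a ha => by rw [hvβ a ha])
  rw [Finset.mem_sdiff, not_and_or, not_not] at hk
  rcases hk with hkI | hkJ
  · simp [hvI k hkI]
  · simp [inner_col_resid_eq_zero X hkJ]

/-- With `s` the signal residual and `S = ∑_{a ∈ I \ J} |β_a|`:
`‖s‖² = ∑_{a ∈ I \ J} β_a ⟨X_a, s⟩ ≤ S M`, while `‖s‖² ≥ λ_min ‖β_{I \ J}‖² ≥ λ_min β_min S`. -/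
lemma mul_betaMin_le_of_forall_abs_inner_resid_le (hl : IsSmallestEig (gram X I) l)
    (hl0 : 0 ≤ l) (hbm : 0 < betaMin β I) (hβ : ∀ k ∉ I, β k = 0) (hJI : J ⊆ I)
    (hJ : (I \ J).Nonempty) {M : ℝ}
    (hM : ∀ a ∈ I, |⟪col X a, resid X J (mulVecE X β)⟫_ℝ| ≤ M) : l * betaMin β I ≤ M := by
  set s := resid X J (mulVecE X β)
  set S := ∑ a ∈ I \ J, |β a|
  have hS : 0 < S := by
    obtain ⟨a, ha⟩ := hJ
    exact hbm.trans_le ((betaMin_le_abs (Finset.mem_sdiff.1 ha).1).trans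
      (Finset.single_le_sum (fun b _ => abs_nonneg (β b)) ha))
  have hupper : ‖s‖ ^ 2 ≤ S * M := by
    rw [norm_sq_resid_eq_sum_sdiff hβ hJI, Finset.sum_mul]
    refine Finset.sum_le_sum fun a ha => ?_
    calc β a * ⟪col X a, s⟫_ℝ ≤ |β a| * |⟪col X a, s⟫_ℝ| := (le_abs_self _).trans (abs_mul _ _).le
      _ ≤ |β a| * M := by gcongr; exact hM a (Finset.mem_sdiff.1 ha).1
  have hlower : l * betaMin β I * S ≤ ‖s‖ ^ 2 := by
    have hs : √l * ‖restrictVec β (I \ J)‖ ≤ ‖s‖ :=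
      sqrt_mul_norm_restrictVec_le_norm_resid hl hβ hJI
    calc l * betaMin β I * S ≤ l * ‖restrictVec β (I \ J)‖ ^ 2 := by
          rw [mul_assoc]; gcongr; exact betaMin_mul_sum_abs_le_norm_sq Finset.sdiff_subset
      _ = (√l * ‖restrictVec β (I \ J)‖) ^ 2 := by rw [mul_pow, Real.sq_sqrt hl0]
      _ ≤ ‖s‖ ^ 2 := by gcongr
  exact le_of_mul_le_mul_right (hlower.trans (hupper.trans_eq (mul_comm _ _))) hS

/-- Off `I` the signal correlations are at most `erc · M` and on `J` they vanish, while some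
index of `I` reaches `M ≥ λ_min β_min`; the noise moves each correlation by at most `ε`. -/
lemma mem_sdiff_of_forall_abs_inner_le (hcols : ∀ j, ‖col X j‖ = 1) (hrank : FullColRank X I)
    (hl : IsSmallestEig (gram X I) l) (hl0 : 0 ≤ l) (herc : erc X I < 1)
    (hsupp : ∀ k, k ∈ I ↔ β k ≠ 0) (hw : ‖w‖ ≤ ε)
    (hε : ε < betaMin β I * l * (1 - erc X I) / 2) (hJI : J ⊆ I) (hJ : (I \ J).Nonempty)
    {j : Fin p} (hj : ∀ j', |⟪col X j', resid X J (mulVecE X β + w)⟫_ℝ| ≤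
      |⟪col X j, resid X J (mulVecE X β + w)⟫_ℝ|) : j ∈ I \ J := by
  have hβ : ∀ k ∉ I, β k = 0 := fun k hk => not_not.1 (mt (hsupp k).2 hk)
  have hbm : 0 < betaMin β I := betaMin_pos hsupp (hJ.mono Finset.sdiff_subset)
  set s := resid X J (mulVecE X β)
  have hnoise (i : Fin p) := abs_le.1 ((abs_abs_inner_col_resid_add_sub_le X (hcols i) J
    (mulVecE X β) w).trans hw)
  obtain ⟨a, -, hmax⟩ :=
    I.exists_max_image (fun a => |⟪col X a, s⟫_ℝ|) (hJ.mono Finset.sdiff_subset)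
  set M := |⟪col X a, s⟫_ℝ|
  have hM : l * betaMin β I ≤ M :=
    mul_betaMin_le_of_forall_abs_inner_resid_le hl hl0 hbm hβ hJI hJ hmax
  have hgap : erc X I * M + ε < M - ε := by nlinarith [erc_nonneg X (I := I)]
  have hjM : M - ε ≤ |⟪col X j, resid X J (mulVecE X β + w)⟫_ℝ| := by
    linarith [(hnoise a).1, hj a]
  refine Finset.mem_sdiff.2 ⟨by_contra fun hjI => ?_, fun hjJ => ?_⟩
  · obtain ⟨v, hvI, -, hv⟩ := exists_resid_mulVecE_eq (X := X) hβ hJI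
    have hs : s ∈ colSpan X I := (mem_colSpan_iff X).2 ⟨v, hvI, hv.symm⟩
    have := abs_inner_col_le_erc_mul X hrank hjI hs (abs_nonneg _) hmax
    linarith [(hnoise j).2]
  · rw [inner_col_resid_eq_zero X hjJ, abs_zero] at hjM
    have : 0 ≤ erc X I * M + ε :=
      add_nonneg (mul_nonneg (erc_nonneg X) (abs_nonneg _)) ((norm_nonneg w).trans hw)
    linarith

end Selection

lemma ompSupp_succ (t : ℕ → Fin p) (k : ℕ) : ompSupp t (k + 1) = insert (t k) (ompSupp t k) := by
  rw [ompSupp, Finset.range_add_one, Finset.image_insert, ompSupp]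

lemma ompSupp_subset_and_card_eq {β : Fin p → ℝ} {I : Finset (Fin p)}
    {w : EuclideanSpace ℝ (Fin n)} {ε l : ℝ} (hcols : ∀ j, ‖col X j‖ = 1)
    (hrank : FullColRank X I) (hl : IsSmallestEig (gram X I) l) (hl0 : 0 ≤ l)
    (herc : erc X I < 1) (hsupp : ∀ k, k ∈ I ↔ β k ≠ 0) (hw : ‖w‖ ≤ ε)
    (hε : ε < betaMin β I * l * (1 - erc X I) / 2) {t : ℕ → Fin p}
    (ht : IsOMP X (mulVecE X β + w) t) :
    ∀ k ≤ I.card, ompSupp t k ⊆ I ∧ (ompSupp t k).card = k := by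
  intro k
  induction k with
  | zero => simp [ompSupp]
  | succ k ih =>
    intro hk
    obtain ⟨hJI, hcard⟩ := ih (by omega)
    have hk := Finset.mem_sdiff.1 <| mem_sdiff_of_forall_abs_inner_le hcols hrank hl hl0 herc
      hsupp hw hε hJI (Finset.sdiff_nonempty_of_card_lt_card (by omega)) (ht k).1
    rw [ompSupp_succ, Finset.card_insert_of_notMem hk.2, hcard]
    exact ⟨Finset.insert_subset hk.1 hJI, rfl⟩

lemma ompSupp_eq_of_forall_le_card {I : Finset (Fin p)} {t : ℕ → Fin p}
    (hJ : ∀ m ≤ I.card, ompSupp t m ⊆ I ∧ (ompSupp t m).card = m) : ompSupp t I.card = I :=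
  Finset.eq_of_subset_of_card_le (hJ _ le_rfl).1 (hJ _ le_rfl).2.ge

/-- With `c m = ‖β_{I \ J^m}‖`: `λ_min c m - ε ≤ ‖r^m‖ ≤ λ_max c m + ε` (as `λ_min ≤ 1 ≤ λ_max`),
`c m ≥ β_min` for `m < |I|`, `c (k - 1) ≤ c k + β_max`, and `c |I| = 0`. -/
lemma ratio_card_lt_ratio {β : Fin p → ℝ} {I : Finset (Fin p)}
    {w : EuclideanSpace ℝ (Fin n)} {ε l L : ℝ} (hcols : ∀ j, ‖col X j‖ = 1)
    (hsupp : ∀ k, k ∈ I ↔ β k ≠ 0) (hl : IsSmallestEig (gram X I) l)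
    (hL : IsLargestEig (gram X I) L) (hlpos : 0 < l) (hw : ‖w‖ ≤ ε) (hε0 : 0 ≤ ε)
    (heb : ε < l * betaMin β I /
      (1 + 2 * (L / l) + (L / l) * (betaMax β I / betaMin β I)))
    {t : ℕ → Fin p} (hJ : ∀ m ≤ I.card, ompSupp t m ⊆ I ∧ (ompSupp t m).card = m)
    {k : ℕ} (hk1 : 1 ≤ k) (hk : k < I.card) :
    ratio X (mulVecE X β + w) t I.card < ratio X (mulVecE X β + w) t k := by
  have hβ : ∀ k ∉ I, β k = 0 := fun k hk => not_not.1 (mt (hsupp k).2 hk)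
  obtain ⟨a, ha⟩ : I.Nonempty := Finset.card_pos.1 (by omega)
  have hbm : 0 < betaMin β I := betaMin_pos hsupp ⟨a, ha⟩
  have hl1 := le_one_of_isSmallestEig_gram X I hcols hl ⟨a, ha⟩
  have hL1 := one_le_of_isLargestEig_gram X I hcols hL ⟨a, ha⟩
  have hsl : l ≤ √l := (Real.le_sqrt hlpos.le hlpos.le).2 (by nlinarith)
  have hsL : √L ≤ L := (Real.sqrt_le_left (by linarith)).2 (by nlinarith)
  set y := mulVecE X β + w
  set c : ℕ → ℝ := fun m => ‖restrictVec β (I \ ompSupp t m)‖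
  have hR1 (m : ℕ) (hm : m ≤ I.card) : l * c m - ε ≤ ‖ompResid X y t m‖ :=
    (sqrt_mul_norm_restrictVec_sub_le_norm_resid hl hβ (hJ m hm).1 hw).trans' (by gcongr)
  have hR2 (m : ℕ) : ‖ompResid X y t m‖ ≤ L * c m + ε :=
    (norm_resid_le_sqrt_mul_norm_restrictVec_add hL hβ hw).trans <| by gcongr
  have hc (m : ℕ) (hm : m < I.card) : betaMin β I ≤ c m :=
    have ⟨_, hb⟩ := Finset.sdiff_nonempty_of_card_lt_card ((hJ m hm.le).2.trans_lt hm)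
    betaMin_le_norm_restrictVec hb
  have hlow (m : ℕ) (hm : m < I.card) : l * betaMin β I - ε ≤ ‖ompResid X y t m‖ :=
    (hR1 m hm.le).trans' <| by gcongr; exact hc m hm
  have hstep : c (k - 1) ≤ c k + betaMax β I := by
    have hsucc := ompSupp_succ t (k - 1)
    rw [Nat.sub_add_cancel hk1] at hsucc
    have htI : t (k - 1) ∈ I := (hJ k hk.le).1 (hsucc ▸ Finset.mem_insert_self _ _)
    simpa only [c, hsucc] using
      (norm_restrictVec_sdiff_le _ _).trans (add_le_add_right (abs_le_betaMax htI) _)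
  have hlast : ‖ompResid X y t I.card‖ ≤ ε := by
    simpa [c, ompSupp_eq_of_forall_le_card hJ, restrictVec, ← Pi.zero_def] using hR2 I.card
  exact div_lt_div_of_bounds hlpos (hl1.trans hL1) hbm
    ((betaMin_le_abs ha).trans (abs_le_betaMax ha)) (hc k hk) hε0 heb hlast
    (hlow _ (by omega)) (hR1 k hk.le) ((hR2 (k - 1)).trans (by gcongr)) (hlow _ (by omega))

end TFOMP

theorem statement14_general {n p : ℕ} (X : Matrix (Fin n) (Fin p) ℝ) (β : Fin p → ℝ)
    (w : EuclideanSpace ℝ (Fin n)) (I : Finset (Fin p)) (k₀ : ℕ)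
    (ε₂ lammin lammax : ℝ)
    (hcols : ∀ j, ‖col X j‖ = 1)
    (hsupp : ∀ k, k ∈ I ↔ β k ≠ 0)
    (hcard : I.card = k₀)
    (hw : ‖w‖ ≤ ε₂)
    (hrank : FullColRank X I)
    (hlammin : IsSmallestEig (gram X I) lammin)
    (hlammax : IsLargestEig (gram X I) lammax)
    (hlampos : 0 < lammin)
    (herc : erc X I < 1)
    (hε0 : 0 ≤ ε₂)
    (hε : ε₂ < min (betaMin β I * lammin * (1 - erc X I) / 2)
        (lammin * betaMin β I /
          (1 + 2 * (lammax / lammin) + (lammax / lammin) * (betaMax β I / betaMin β I)))) :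
    ∀ t : ℕ → Fin p, IsOMP X (mulVecE X β + w) t →
      ompSupp t k₀ = I ∧
        ∀ k : ℕ, 1 ≤ k → k ≤ k₀ - 1 →
          ratio X (mulVecE X β + w) t k₀ < ratio X (mulVecE X β + w) t k := by
  intro t ht
  subst hcard
  have hJ := ompSupp_subset_and_card_eq X hcols hrank hlammin hlampos.le herc hsupp hw
    (hε.trans_le (min_le_left _ _)) ht
  refine ⟨ompSupp_eq_of_forall_le_card hJ, fun k hk1 hk => ?_⟩
  exact ratio_card_lt_ratio X hcols hsupp hlammin hlammax hlampos hw hε0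
    (hε.trans_le (min_le_right _ _)) hJ hk1 (by omega)

/-- in the model `y = Xβ + w`, `‖w‖₂ ≤ ε₂`, assume `X_I` has full
column rank (`λ_min > 0`), `erc(X,I) < 1`, and `0 ≤ ε₂ < min(ε^a, ε^b)` where
`ε^a = β_min λ_min(1 − erc(X,I))/2` and
`ε^b = λ_min β_min/(1 + 2λ_max/λ_min + (λ_max/λ_min)(β_max/β_min))`. Then the
first `k₀` indices selected by OMP run on `y` are exactly the elements of `I`,
and `t(k) > t(k₀)` for every `1 ≤ k ≤ k₀ − 1`. -/
theorem statement14 {n p : ℕ} (X : Matrix (Fin n) (Fin p) ℝ) (β : Fin p → ℝ)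
    (w : EuclideanSpace ℝ (Fin n)) (I : Finset (Fin p)) (k₀ : ℕ)
    (ε₂ lammin lammax : ℝ)
    (hcols : ∀ j, ‖col X j‖ = 1)
    (hsupp : ∀ k, k ∈ I ↔ β k ≠ 0)
    (hcard : I.card = k₀) (hk₀ : 1 ≤ k₀)
    (hw : ‖w‖ ≤ ε₂)
    (hrank : FullColRank X I)
    (hlammin : IsSmallestEig (gram X I) lammin)
    (hlammax : IsLargestEig (gram X I) lammax)
    (hlampos : 0 < lammin)
    (herc : erc X I < 1)
    (hε0 : 0 ≤ ε₂)
    (hε : ε₂ < min (betaMin β I * lammin * (1 - erc X I) / 2)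
        (lammin * betaMin β I /
          (1 + 2 * (lammax / lammin) + (lammax / lammin) * (betaMax β I / betaMin β I)))) :
    ∀ t : ℕ → Fin p, IsOMP X (mulVecE X β + w) t →
      ompSupp t k₀ = I ∧
        ∀ k : ℕ, 1 ≤ k → k ≤ k₀ - 1 →
          ratio X (mulVecE X β + w) t k₀ < ratio X (mulVecE X β + w) t k :=
  statement14_general X β w I k₀ ε₂ lammin lammax hcols hsupp hcard hw hrank hlammin hlammax hlampos
    herc hε0 hε
end
end
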